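/- Let ⟨·,·⟩ have signature (p,q) on ℂⁿ with p ≠ q, let V ⊂ ℂⁿ be maximal isotropic, and let M : ℂⁿ → ℂⁿ be a linear map with image in V, vanishing on V ⊕ sV and on a complement of a line in (V⊕sV)^⊥. Then with N := M - M*, one has M² = (M*)² = M*M = 0 and hence N³ = 0. -/

import Mathlib

open Matrix

/-- The matrix `s = diag(-I_p, I_q)` defining the signature-`(p,q)` Hermitian form on `ℂⁿ`. -/
noncomputable def sig (p n : ℕ) : Matrix (Fin n) (Fin n) ℂ :=
  Matrix.diagonal fun i => if (i : ℕ) < p then -1 else 1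

/-- The Hermitian form `⟨v,w⟩ = -∑_{i<p} v̄ᵢwᵢ + ∑_{i≥p} v̄ᵢwᵢ = v̄ᵗ s w`. -/
noncomputable def pqform (p n : ℕ) (v w : Fin n → ℂ) : ℂ :=
  star v ⬝ᵥ (sig p n *ᵥ w)

/-- The adjoint `A* = s Āᵗ s` with respect to the signature-`(p,q)` form. -/
noncomputable def pqadj (p n : ℕ) (A : Matrix (Fin n) (Fin n) ℂ) : Matrix (Fin n) (Fin n) ℂ :=
  sig p n * Aᴴ * sig p n

/-! Since `im M ⊆ V ⊆ ker M`, `M² = 0`; since `V` is isotropic, `⟨x, M*M y⟩ = ⟨M x, M y⟩ = 0`,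
so `M*M = 0` by nondegeneracy, and `(M*)² = (M²)* = 0`. These three relations give
`N² = -M M*` and then `N³ = 0`. -/

theorem sub_pow_three_eq_zero {R : Type*} [Ring R] {a b : R}
    (ha : a * a = 0) (hb : b * b = 0) (hba : b * a = 0) : (a - b) ^ 3 = 0 := by
  have hsq : (a - b) * (a - b) = -(a * b) := by
    rw [sub_mul, mul_sub, mul_sub, ha, hb, hba]
    abel
  rw [pow_succ, pow_two, hsq, neg_mul, mul_sub, mul_assoc, mul_assoc, hba, hb]
  simp

theorem mul_self_eq_zero_of_range_le_ker {R ι : Type*} [CommSemiring R] [Fintype ι]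
    {V : Submodule R (ι → R)} {M : Matrix ι ι R}
    (hrange : ∀ x, M *ᵥ x ∈ V) (hker : ∀ x ∈ V, M *ᵥ x = 0) : M * M = 0 :=
  ext_iff_mulVec.mpr fun x => by rw [← mulVec_mulVec, hker _ (hrange x), zero_mulVec]

theorem sig_mul_sig (p n : ℕ) : sig p n * sig p n = 1 := by
  rw [sig, diagonal_mul_diagonal, ← diagonal_one]
  congr 1
  ext i
  split_ifs <;> norm_num

theorem pqform_pqadj_mulVec (p n : ℕ) (A : Matrix (Fin n) (Fin n) ℂ) (x y : Fin n → ℂ) :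
    pqform p n x (pqadj p n A *ᵥ y) = pqform p n (A *ᵥ x) y := by
  rw [pqform, pqform, pqadj, star_mulVec, ← mulVec_mulVec, ← mulVec_mulVec, mulVec_mulVec,
    sig_mul_sig, one_mulVec, dotProduct_mulVec]

open scoped ComplexOrder in
theorem eq_zero_of_forall_pqform_eq_zero (p n : ℕ) {z : Fin n → ℂ}
    (h : ∀ x, pqform p n x z = 0) : z = 0 := by
  have hsz : sig p n *ᵥ z = 0 := dotProduct_star_self_eq_zero.mp (h _)
  rw [← one_mulVec z, ← sig_mul_sig p n, ← mulVec_mulVec, hsz, mulVec_zero]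

theorem pqadj_mul_pqadj (p n : ℕ) (A B : Matrix (Fin n) (Fin n) ℂ) :
    pqadj p n A * pqadj p n B = pqadj p n (B * A) := by
  simp only [pqadj, conjTranspose_mul, Matrix.mul_assoc]
  rw [← Matrix.mul_assoc (sig p n) (sig p n), sig_mul_sig, Matrix.one_mul]

theorem pqadj_mul_eq_zero_of_range_isotropic {p n : ℕ} {V : Submodule ℂ (Fin n → ℂ)}
    (hiso : ∀ v ∈ V, ∀ w ∈ V, pqform p n v w = 0) {M : Matrix (Fin n) (Fin n) ℂ}
    (hrange : ∀ x, M *ᵥ x ∈ V) : pqadj p n M * M = 0 :=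
  ext_iff_mulVec.mpr fun y => by
    rw [← mulVec_mulVec, zero_mulVec]
    refine eq_zero_of_forall_pqform_eq_zero p n fun x => ?_
    rw [pqform_pqadj_mulVec]
    exact hiso _ (hrange x) _ (hrange y)

theorem stmt_14_general (p n : ℕ)
    (V : Submodule ℂ (Fin n → ℂ))
    (hiso : ∀ v ∈ V, ∀ w ∈ V, pqform p n v w = 0)
    (M : Matrix (Fin n) (Fin n) ℂ)
    (himM : ∀ x : Fin n → ℂ, M *ᵥ x ∈ V)
    (hMV : ∀ x ∈ V, M *ᵥ x = 0) :
    M * M = 0 ∧ pqadj p n M * pqadj p n M = 0 ∧ pqadj p n M * M = 0 ∧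
      (M - pqadj p n M) ^ 3 = 0 := by
  have hMM : M * M = 0 := mul_self_eq_zero_of_range_le_ker himM hMV
  have hAA : pqadj p n M * pqadj p n M = 0 := by
    rw [pqadj_mul_pqadj, hMM, pqadj, conjTranspose_zero, Matrix.mul_zero, Matrix.zero_mul]
  have hAM : pqadj p n M * M = 0 := pqadj_mul_eq_zero_of_range_isotropic hiso himM
  exact ⟨hMM, hAA, hAM, sub_pow_three_eq_zero hMM hAA hAM⟩

theorem stmt_14 (p q n : ℕ) (hn : n = p + q) (hpq : p ≠ q)
    (V : Submodule ℂ (Fin n → ℂ))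
    (hiso : ∀ v ∈ V, ∀ w ∈ V, pqform p n v w = 0)
    (hmax : ∀ W : Submodule ℂ (Fin n → ℂ),
      V ≤ W → (∀ v ∈ W, ∀ w ∈ W, pqform p n v w = 0) → W = V)
    (M : Matrix (Fin n) (Fin n) ℂ)
    (himM : ∀ x : Fin n → ℂ, M *ᵥ x ∈ V)
    (hMV : ∀ x ∈ V, M *ᵥ x = 0)
    (hMsV : ∀ x ∈ V, M *ᵥ (sig p n *ᵥ x) = 0)
    (hline : ∃ w : Fin n → ℂ,
      (∀ y ∈ V ⊔ Submodule.map (Matrix.mulVecLin (sig p n)) V, pqform p n y w = 0) ∧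
      ∀ u : Fin n → ℂ,
        (∀ y ∈ V ⊔ Submodule.map (Matrix.mulVecLin (sig p n)) V, pqform p n y u = 0) →
        pqform p n w u = 0 → M *ᵥ u = 0) :
    M * M = 0 ∧ pqadj p n M * pqadj p n M = 0 ∧ pqadj p n M * M = 0 ∧
      (M - pqadj p n M) ^ 3 = 0 :=
  stmt_14_general p n V hiso M himM hMV
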